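/- Define the observed-data posterior-draw standard-deviation estimator σ̂_PD = σ·√(U_obs/U_PD). If ν_PD > 1 then E[σ̂_PD] = σ·Γ(n_obs/2)·Γ((n_obs + ν_prior − 2)/2)/(Γ((n_obs − 1)/2)·Γ((n_obs + ν_prior − 1)/2)). If moreover ν_PD > 2 then Var(σ̂_PD) = σ²·((n_obs − 1)/(n_obs + ν_prior − 3) − Γ(n_obs/2)²·Γ((n_obs + ν_prior − 2)/2)²/(Γ((n_obs − 1)/2)²·Γ((n_obs + ν_prior − 1)/2)²)). -/

import Mathlib

open MeasureTheory ProbabilityTheory NNReal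

/-!
Write `a = ν_obs / 2` and `b = ν_PD / 2`, so that `U_obs ~ Γ(a, 1/2)` and `U_PD ~ Γ(b, 1/2)` are
independent and `σ̂_PD / σ = (U_obs / U_PD) ^ (1/2)`. Multiplying the `Γ(a, r)` density by `x ^ s`
gives `Γ(a + s) / Γ(a) · r ^ (-s)` times the `Γ(a + s, r)` density, so `E[X ^ s]` is that constant
whenever `a + s > 0`. By independence the common rate cancels and
`E[(U_obs / U_PD) ^ s] = Γ(a + s) Γ(b - s) / (Γ(a) Γ(b))` for `-a < s < b`: the exponent `s = 1/2`
gives the mean, and `s = 1` gives `E[σ̂_PD²] = σ² a / (b - 1)`, hence the variance.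
-/

namespace ProbabilityTheory

open Real Set

section GammaMoments

variable {a r s : ℝ}

lemma ae_nonneg_gammaMeasure : ∀ᵐ x ∂gammaMeasure a r, 0 ≤ x := by
  rw [ae_iff]
  simp only [not_le]
  change gammaMeasure a r (Iio 0) = 0
  rw [gammaMeasure, withDensity_apply _ measurableSet_Iio, lintegral_gammaPDF_of_nonpos le_rfl]

variable (ha : 0 < a) (hr : 0 < r)
include ha hr

lemma integral_gammaMeasure (f : ℝ → ℝ) :
    ∫ x, f x ∂gammaMeasure a r = ∫ x, gammaPDFReal a r x * f x := by
  rw [gammaMeasure, integral_withDensity_eq_integral_toReal_smul (f := gammaPDF a r)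
    (measurable_gammaPDFReal a r).ennreal_ofReal (ae_of_all _ fun _ => ENNReal.ofReal_lt_top)]
  simp only [gammaPDF, ENNReal.toReal_ofReal (gammaPDFReal_nonneg ha hr _), smul_eq_mul]

lemma integrable_gammaMeasure_iff {f : ℝ → ℝ} :
    Integrable f (gammaMeasure a r) ↔ Integrable (fun x => gammaPDFReal a r x * f x) := by
  rw [gammaMeasure, integrable_withDensity_iff_integrable_smul' (f := gammaPDF a r)
    (measurable_gammaPDFReal a r).ennreal_ofReal (ae_of_all _ fun _ => ENNReal.ofReal_lt_top)]
  simp only [gammaPDF, ENNReal.toReal_ofReal (gammaPDFReal_nonneg ha hr _), smul_eq_mul]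

lemma integrable_gammaPDFReal : Integrable (gammaPDFReal a r) := by
  have := isProbabilityMeasure_gammaMeasure ha hr
  simpa using (integrable_gammaMeasure_iff ha hr (f := fun _ => (1 : ℝ))).1 (integrable_const 1)

lemma integral_gammaPDFReal : ∫ x, gammaPDFReal a r x = 1 := by
  have := isProbabilityMeasure_gammaMeasure ha hr
  simpa using (integral_gammaMeasure ha hr fun _ => (1 : ℝ)).symm

omit ha in
lemma gammaPDFReal_mul_rpow (has : 0 < a + s) {x : ℝ} (hx : x ≠ 0) :
    gammaPDFReal a r x * x ^ s
      = Gamma (a + s) / Gamma a * r ^ (-s) * gammaPDFReal (a + s) r x := by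
  rcases hx.lt_or_gt with hx | hx
  · simp [gammaPDFReal, not_le.2 hx]
  have := (Gamma_pos_of_pos has).ne'
  simp only [gammaPDFReal, if_pos hx.le, show a + s - 1 = a - 1 + s by ring, rpow_add hx,
    rpow_add hr, rpow_neg hr.le]
  field_simp

omit ha in
lemma gammaPDFReal_mul_rpow_ae_eq (has : 0 < a + s) :
    (fun x => gammaPDFReal a r x * x ^ s)
      =ᵐ[volume] fun x => Gamma (a + s) / Gamma a * r ^ (-s) * gammaPDFReal (a + s) r x := by
  filter_upwards [Measure.ae_ne volume 0] with x hx
  exact gammaPDFReal_mul_rpow hr has hx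

lemma integrable_rpow_gammaMeasure (has : 0 < a + s) :
    Integrable (fun x => x ^ s) (gammaMeasure a r) := by
  rw [integrable_gammaMeasure_iff ha hr, integrable_congr (gammaPDFReal_mul_rpow_ae_eq hr has)]
  exact (integrable_gammaPDFReal has hr).const_mul _

lemma integral_rpow_gammaMeasure (has : 0 < a + s) :
    ∫ x, x ^ s ∂gammaMeasure a r = Gamma (a + s) / Gamma a * r ^ (-s) := by
  rw [integral_gammaMeasure ha hr, integral_congr_ae (gammaPDFReal_mul_rpow_ae_eq hr has),
    integral_const_mul, integral_gammaPDFReal has hr, mul_one]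

end GammaMoments

section RatioMoments

variable {Ω : Type*} [MeasurableSpace Ω] {P : Measure Ω} {U V : Ω → ℝ} {a b r s : ℝ}

lemma aemeasurable_of_map_eq_gammaMeasure (ha : 0 < a) (hr : 0 < r)
    (hU : P.map U = gammaMeasure a r) : AEMeasurable U P :=
  .of_map_ne_zero (hU ▸ (isProbabilityMeasure_gammaMeasure ha hr).ne_zero)

lemma ae_nonneg_of_map_eq_gammaMeasure (ha : 0 < a) (hr : 0 < r)
    (hU : P.map U = gammaMeasure a r) : ∀ᵐ ω ∂P, 0 ≤ U ω :=
  ae_of_ae_map (aemeasurable_of_map_eq_gammaMeasure ha hr hU) (hU ▸ ae_nonneg_gammaMeasure)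

lemma integrable_rpow_of_map_eq_gammaMeasure (ha : 0 < a) (hr : 0 < r) (has : 0 < a + s)
    (hU : P.map U = gammaMeasure a r) : Integrable (fun ω => U ω ^ s) P :=
  (integrable_map_measure (g := fun x : ℝ => x ^ s) (by fun_prop)
    (aemeasurable_of_map_eq_gammaMeasure ha hr hU)).1 (hU ▸ integrable_rpow_gammaMeasure ha hr has)

lemma integral_rpow_of_map_eq_gammaMeasure (ha : 0 < a) (hr : 0 < r) (has : 0 < a + s)
    (hU : P.map U = gammaMeasure a r) :
    ∫ ω, U ω ^ s ∂P = Gamma (a + s) / Gamma a * r ^ (-s) := by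
  rw [← integral_map (f := fun x : ℝ => x ^ s) (aemeasurable_of_map_eq_gammaMeasure ha hr hU)
    (by fun_prop), hU, integral_rpow_gammaMeasure ha hr has]

variable (hUV : IndepFun U V P) (hU : P.map U = gammaMeasure a r)
  (hV : P.map V = gammaMeasure b r) (ha : 0 < a) (hb : 0 < b) (hr : 0 < r)
include hU hV ha hb hr

omit hUV in
lemma rpow_div_ae_eq_rpow_mul_rpow_neg :
    (fun ω => (U ω / V ω) ^ s) =ᵐ[P] fun ω => U ω ^ s * V ω ^ (-s) := by
  filter_upwards [ae_nonneg_of_map_eq_gammaMeasure ha hr hU,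
    ae_nonneg_of_map_eq_gammaMeasure hb hr hV] with ω hUω hVω
  rw [div_rpow hUω hVω, rpow_neg hVω, div_eq_mul_inv]

include hUV

omit hU hV ha hb hr in
lemma indepFun_rpow_rpow_neg : IndepFun (fun ω => U ω ^ s) (fun ω => V ω ^ (-s)) P :=
  hUV.comp (measurable_id.pow_const s) (measurable_id.pow_const (-s))

lemma integrable_rpow_div_of_map_eq_gammaMeasure (hsa : -a < s) (hsb : s < b) :
    Integrable (fun ω => (U ω / V ω) ^ s) P := by
  rw [integrable_congr (rpow_div_ae_eq_rpow_mul_rpow_neg hU hV ha hb hr)]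
  exact (indepFun_rpow_rpow_neg hUV).integrable_mul
    (integrable_rpow_of_map_eq_gammaMeasure ha hr (by linarith) hU)
    (integrable_rpow_of_map_eq_gammaMeasure hb hr (by linarith) hV)

lemma integral_rpow_div_of_map_eq_gammaMeasure (hsa : -a < s) (hsb : s < b) :
    ∫ ω, (U ω / V ω) ^ s ∂P = Gamma (a + s) * Gamma (b - s) / (Gamma a * Gamma b) := by
  rw [integral_congr_ae (rpow_div_ae_eq_rpow_mul_rpow_neg hU hV ha hb hr),
    (indepFun_rpow_rpow_neg hUV).integral_fun_mul_eq_mul_integral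
      (integrable_rpow_of_map_eq_gammaMeasure ha hr (by linarith) hU).aestronglyMeasurable
      (integrable_rpow_of_map_eq_gammaMeasure hb hr (by linarith) hV).aestronglyMeasurable,
    integral_rpow_of_map_eq_gammaMeasure ha hr (by linarith) hU,
    integral_rpow_of_map_eq_gammaMeasure hb hr (by linarith) hV, neg_neg, ← sub_eq_add_neg,
    rpow_neg hr.le]
  have := (rpow_pos_of_pos hr s).ne'
  field_simp

lemma integrable_div_of_map_eq_gammaMeasure (hb1 : 1 < b) : Integrable (fun ω => U ω / V ω) P := by
  simpa only [Real.rpow_one] using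
    integrable_rpow_div_of_map_eq_gammaMeasure hUV hU hV ha hb hr (s := 1) (by linarith) hb1

lemma integral_div_of_map_eq_gammaMeasure (hb1 : 1 < b) : ∫ ω, U ω / V ω ∂P = a / (b - 1) := by
  have hΓb : Gamma b = (b - 1) * Gamma (b - 1) := by
    simpa using Gamma_add_one (sub_ne_zero.2 hb1.ne')
  have := (Gamma_pos_of_pos ha).ne'
  have := (Gamma_pos_of_pos (sub_pos.2 hb1)).ne'
  have := (sub_pos.2 hb1).ne'
  have h := integral_rpow_div_of_map_eq_gammaMeasure hUV hU hV ha hb hr (s := 1) (by linarith) hb1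
  simp only [Real.rpow_one] at h
  rw [h, Gamma_add_one ha.ne', hΓb]
  field_simp

lemma integral_sqrt_div_of_map_eq_gammaMeasure (hb2 : 1 / 2 < b) :
    ∫ ω, √(U ω / V ω) ∂P = Gamma (a + 1 / 2) * Gamma (b - 1 / 2) / (Gamma a * Gamma b) := by
  simp_rw [Real.sqrt_eq_rpow]
  exact integral_rpow_div_of_map_eq_gammaMeasure hUV hU hV ha hb hr (by linarith) hb2

lemma variance_sqrt_div_of_map_eq_gammaMeasure [IsProbabilityMeasure P] (hb1 : 1 < b) :
    variance (fun ω => √(U ω / V ω)) P = a / (b - 1) - (∫ ω, √(U ω / V ω) ∂P) ^ 2 := by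
  have hsq : (fun ω => √(U ω / V ω)) ^ 2 =ᵐ[P] fun ω => U ω / V ω := by
    filter_upwards [ae_nonneg_of_map_eq_gammaMeasure ha hr hU,
      ae_nonneg_of_map_eq_gammaMeasure hb hr hV] with ω hUω hVω
    exact sq_sqrt (div_nonneg hUω hVω)
  have hmeas : AEStronglyMeasurable (fun ω => √(U ω / V ω)) P :=
    ((aemeasurable_of_map_eq_gammaMeasure ha hr hU).div
      (aemeasurable_of_map_eq_gammaMeasure hb hr hV)).sqrt.aestronglyMeasurable
  have hL2 : MemLp (fun ω => √(U ω / V ω)) 2 P :=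
    (memLp_two_iff_integrable_sq hmeas).2
      ((integrable_congr hsq).2 (integrable_div_of_map_eq_gammaMeasure hUV hU hV ha hb hr hb1))
  rw [variance_eq_sub hL2, integral_congr_ae hsq,
    integral_div_of_map_eq_gammaMeasure hUV hU hV ha hb hr hb1]

end RatioMoments

end ProbabilityTheory

theorem stmt3_general
    {Ω : Type*} [MeasurableSpace Ω] (P : Measure Ω) [IsProbabilityMeasure P]
    (σ : ℝ)
    (n_obs : ℕ) (hn : 2 ≤ n_obs)
    (ν_prior : ℝ)
    (U_obs Z_obs U_PD Z_PD : Ω → ℝ)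
    (hU : P.map U_obs = gammaMeasure (((n_obs : ℝ) - 1) / 2) (1 / 2))
    (hUPD : P.map U_PD = gammaMeasure (((n_obs : ℝ) - 1 + ν_prior) / 2) (1 / 2))
    (hindep : iIndepFun ![U_obs, Z_obs, U_PD, Z_PD] P) :
    ((n_obs : ℝ) - 1 + ν_prior > 1 →
      (∫ ω, σ * Real.sqrt (U_obs ω / U_PD ω) ∂P)
        = σ * Real.Gamma ((n_obs : ℝ) / 2) * Real.Gamma (((n_obs : ℝ) + ν_prior - 2) / 2)
            / (Real.Gamma (((n_obs : ℝ) - 1) / 2)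
                * Real.Gamma (((n_obs : ℝ) + ν_prior - 1) / 2)))
    ∧ ((n_obs : ℝ) - 1 + ν_prior > 2 →
      variance (fun ω => σ * Real.sqrt (U_obs ω / U_PD ω)) P
        = σ ^ 2 * (((n_obs : ℝ) - 1) / ((n_obs : ℝ) + ν_prior - 3)
            - Real.Gamma ((n_obs : ℝ) / 2) ^ 2
                * Real.Gamma (((n_obs : ℝ) + ν_prior - 2) / 2) ^ 2
                / (Real.Gamma (((n_obs : ℝ) - 1) / 2) ^ 2
                    * Real.Gamma (((n_obs : ℝ) + ν_prior - 1) / 2) ^ 2))) := by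
  have hn' : (2 : ℝ) ≤ n_obs := by exact_mod_cast hn
  have ha : 0 < ((n_obs : ℝ) - 1) / 2 := by linarith
  have hr : (0 : ℝ) < 1 / 2 := by norm_num
  have hUV : IndepFun U_obs U_PD P := by
    simpa using hindep.indepFun (show (0 : Fin 4) ≠ 2 by decide)
  have hmean : (n_obs : ℝ) - 1 + ν_prior > 1 →
      ∫ ω, √(U_obs ω / U_PD ω) ∂P
        = Real.Gamma ((n_obs : ℝ) / 2) * Real.Gamma (((n_obs : ℝ) + ν_prior - 2) / 2)
          / (Real.Gamma (((n_obs : ℝ) - 1) / 2)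
            * Real.Gamma (((n_obs : ℝ) + ν_prior - 1) / 2)) := by
    intro hν
    rw [integral_sqrt_div_of_map_eq_gammaMeasure hUV hU hUPD ha (by linarith) hr (by linarith)]
    ring_nf
  refine ⟨fun hν => by rw [integral_const_mul, hmean hν]; ring, fun hν => ?_⟩
  rw [variance_const_mul, variance_sqrt_div_of_map_eq_gammaMeasure hUV hU hUPD ha (by linarith) hr
    (by linarith), hmean (by linarith), div_pow, mul_pow, mul_pow]
  congr 2
  rw [show ((n_obs : ℝ) - 1 + ν_prior) / 2 - 1 = ((n_obs : ℝ) + ν_prior - 3) / 2 by ring,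
    div_div_div_cancel_right₀ two_ne_zero]

/-- mean and variance of the observed-data posterior-draw
standard-deviation estimator `σ̂_PD = σ · √(U_obs / U_PD)`. -/
theorem stmt3
    {Ω : Type*} [MeasurableSpace Ω] (P : Measure Ω) [IsProbabilityMeasure P]
    (μ σ : ℝ) (hσ : 0 < σ)
    (n_obs : ℕ) (hn : 2 ≤ n_obs)
    (ν_prior : ℝ) (hνPD : 0 < (n_obs : ℝ) - 1 + ν_prior)
    (U_obs Z_obs U_PD Z_PD : Ω → ℝ)
    (hUmeas : Measurable U_obs) (hZmeas : Measurable Z_obs)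
    (hUPDmeas : Measurable U_PD) (hZPDmeas : Measurable Z_PD)
    (hU : P.map U_obs = gammaMeasure (((n_obs : ℝ) - 1) / 2) (1 / 2))
    (hZ : P.map Z_obs = gaussianReal 0 (1 / (n_obs : ℝ≥0)))
    (hUPD : P.map U_PD = gammaMeasure (((n_obs : ℝ) - 1 + ν_prior) / 2) (1 / 2))
    (hZPD : P.map Z_PD = gaussianReal 0 (1 / (n_obs : ℝ≥0)))
    (hindep : iIndepFun ![U_obs, Z_obs, U_PD, Z_PD] P) :
    ((n_obs : ℝ) - 1 + ν_prior > 1 →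
      (∫ ω, σ * Real.sqrt (U_obs ω / U_PD ω) ∂P)
        = σ * Real.Gamma ((n_obs : ℝ) / 2) * Real.Gamma (((n_obs : ℝ) + ν_prior - 2) / 2)
            / (Real.Gamma (((n_obs : ℝ) - 1) / 2)
                * Real.Gamma (((n_obs : ℝ) + ν_prior - 1) / 2)))
    ∧ ((n_obs : ℝ) - 1 + ν_prior > 2 →
      variance (fun ω => σ * Real.sqrt (U_obs ω / U_PD ω)) P
        = σ ^ 2 * (((n_obs : ℝ) - 1) / ((n_obs : ℝ) + ν_prior - 3)
            - Real.Gamma ((n_obs : ℝ) / 2) ^ 2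
                * Real.Gamma (((n_obs : ℝ) + ν_prior - 2) / 2) ^ 2
                / (Real.Gamma (((n_obs : ℝ) - 1) / 2) ^ 2
                    * Real.Gamma (((n_obs : ℝ) + ν_prior - 1) / 2) ^ 2))) :=
  stmt3_general P σ n_obs hn ν_prior U_obs Z_obs U_PD Z_PD hU hUPD hindep
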